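/- arXiv:2404.11007 — 2 statements merged into one kernel-verified Lean document; each statement's English description precedes it below -/
import Mathlib

section
/- Let the finite index set S be partitioned into a retained set R and an eliminated set E. Let K be a real S×S matrix and t ∈ ℝ^S a vector, written in block form K = [[K_RR, K_RE],[K_ER, K_EE]], t = (t_R, t_E). Assume I - K_EE is invertible. Define the reduced transition probability matrix K̂ = K_RR + K_RE (I - K_EE)⁻¹ K_ER and reduced residence time vector t̂ = t_R + K_RE (I - K_EE)⁻¹ t_E on R. If τ ∈ ℝ^S satisfies (I - K) τ = t, then its restriction τ_R to R satisfies (I - K̂) τ_R = t̂. In particular, removing milestones outside the core sets with the adjusted transition probabilities and residence times leaves the mean first passage times at all retained milestones unchanged. -/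
/-! The reduced operator `1 - K̂` is the Schur complement of the block `1 - K_EE` in `1 - K`,
so the claim is block Gaussian elimination applied to `(1 - K) τ = t`. -/

open Matrix

namespace Matrix

variable {l m α : Type*} [CommRing α]

theorem schur_mulVec_inl_of_fromBlocks_mulVec [Fintype l] [Fintype m] [DecidableEq m]
    (A : Matrix l l α) (B : Matrix l m α) (C : Matrix m l α) (D : Matrix m m α)
    (hD : IsUnit D) {x w : l ⊕ m → α} (h : fromBlocks A B C D *ᵥ x = w) :
    (A - B * D⁻¹ * C) *ᵥ (x ∘ Sum.inl) = w ∘ Sum.inl - (B * D⁻¹) *ᵥ (w ∘ Sum.inr) := by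
  rw [fromBlocks_mulVec] at h
  have hl : A *ᵥ (x ∘ Sum.inl) + B *ᵥ (x ∘ Sum.inr) = w ∘ Sum.inl := by
    rw [← h]; rfl
  have hm : C *ᵥ (x ∘ Sum.inl) + D *ᵥ (x ∘ Sum.inr) = w ∘ Sum.inr := by
    rw [← h]; rfl
  have hx : x ∘ Sum.inr = D⁻¹ *ᵥ (w ∘ Sum.inr - C *ᵥ (x ∘ Sum.inl)) := by
    rw [← hm, add_sub_cancel_left, mulVec_mulVec,
      nonsing_inv_mul _ ((isUnit_iff_isUnit_det D).mp hD), one_mulVec]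
  rw [← hl, hx]
  simp only [sub_mulVec, ← mulVec_mulVec, mulVec_sub]
  abel

theorem one_sub_eq_fromBlocks [DecidableEq l] [DecidableEq m] (K : Matrix (l ⊕ m) (l ⊕ m) α) :
    1 - K = fromBlocks (1 - K.toBlocks₁₁) (-K.toBlocks₁₂) (-K.toBlocks₂₁) (1 - K.toBlocks₂₂) := by
  ext (i | i) (j | j) <;> simp [one_apply, toBlocks₁₁, toBlocks₁₂, toBlocks₂₁, toBlocks₂₂]

end Matrix

/-- Eliminating a set `E` of milestones (the second summand of the index type) via the
block-elimination formulas `K̂ = K_RR + K_RE (I - K_EE)⁻¹ K_ER` and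
`t̂ = t_R + K_RE (I - K_EE)⁻¹ t_E` preserves the mean first passage times at the retained
milestones: if `(I - K) τ = t` then `(I - K̂) τ_R = t̂`. -/
theorem block_elimination_preserves_mfpt
    (R E : Type*) [Fintype R] [Fintype E] [DecidableEq R] [DecidableEq E]
    (K : Matrix (R ⊕ E) (R ⊕ E) ℝ) (t τ : R ⊕ E → ℝ)
    (hinv : IsUnit (1 - K.toBlocks₂₂))
    (h : Matrix.mulVec (1 - K) τ = t) :
    Matrix.mulVec
        (1 - (K.toBlocks₁₁ + K.toBlocks₁₂ * (1 - K.toBlocks₂₂)⁻¹ * K.toBlocks₂₁))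
        (τ ∘ Sum.inl)
      = (t ∘ Sum.inl) + Matrix.mulVec (K.toBlocks₁₂ * (1 - K.toBlocks₂₂)⁻¹) (t ∘ Sum.inr) := by
  rw [one_sub_eq_fromBlocks] at h
  have hschur := schur_mulVec_inl_of_fromBlocks_mulVec _ _ _ _ hinv h
  simpa only [Matrix.neg_mul, Matrix.mul_neg, neg_neg, sub_neg_eq_add, neg_mulVec, sub_sub]
    using hschur
end

section
/- Let α, β, γ, η ∈ ℝ with 0 ≤ α, β, γ, η ≤ 1 and (1-α)β < 1, and let t_a, t_b, t_c, t_d ∈ ℝ. Consider the one-dimensional four-state network a–b–c–d in which a transitions to b with probability 1-γ (and to its left neighbor with probability γ), b transitions to a with probability α and to c with probability 1-α, c transitions to b with probability β and to d with probability 1-β, and d transitions to c with probability η (and to its right neighbor with probability 1-η). Let route 1 eliminate states b and c directly via the block-elimination formulas K̂ = K_RR + K_RE (I - K_EE)⁻¹ K_ER and t̂ = t_R + K_RE (I - K_EE)⁻¹ t_E with E = {b, c}. Let route 2 first replace the mutual transitions between b and c by the adjusted values K^{(A')}_{ba} = α/(1+(α-1)β), K^{(A')}_{bd} = (1-α)(1-β)/(1+(α-1)β),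 K^{(A')}_{ca} = αβ/(1+(α-1)β), K^{(A')}_{cd} = (1-β)/(1+(α-1)β), K^{(A')}_{bc} = K^{(A')}_{cb} = 0, with residence times t^{(A')}_b = (t_b+(1-α)t_c)/(1+(α-1)β) and t^{(A')}_c = (β t_b + t_c)/(1+(α-1)β), and then eliminate b and c by the same block-elimination formulas. Then both routes yield identical reduced transition probabilities between a and d and identical reduced residence times t̂_a and t̂_d. -/
open Matrix

/-!
Making `b` and `c` mutually invisible replaces their outgoing kernel `K_ER` and residence times
`t_E` by `(I - K_EE)⁻¹ K_ER` and `(I - K_EE)⁻¹ t_E`, i.e. it performs the part of the block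
elimination that sums over excursions inside `E = {b, c}`. After that `K_EE = 0`, so the second
elimination contributes nothing further and both routes agree by associativity. The formulas of
Appendix B are exactly these products, read off from
`(I - K_EE)⁻¹ = (1 - (1 - α) β)⁻¹ [[1, 1 - α], [β, 1]]`.
-/

-- No hypothesis on `p * q`: if it is `1`, both sides are the junk value `0`.
theorem inv_one_sub_antidiag {𝕜 : Type*} [Field 𝕜] (p q : 𝕜) :
    (1 - !![0, p; q, 0])⁻¹ = (1 - p * q)⁻¹ • !![1, p; q, 1] := by
  have h : (1 - !![0, p; q, 0] : Matrix (Fin 2) (Fin 2) 𝕜) = !![1, -p; -q, 1] := by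
    rw [one_fin_two]; ext i j; fin_cases i <;> fin_cases j <;> simp
  rw [h, inv_def, det_fin_two_of, adjugate_fin_two_of, Ring.inverse_eq_inv']
  simp [sub_eq_add_neg]

theorem inv_one_sub_chain_mul_exit {𝕜 : Type*} [Field 𝕜] (α β : 𝕜) :
    (1 - !![0, 1 - α; β, 0])⁻¹ * !![α, 0; 0, 1 - β] =
      !![α / (1 + (α - 1) * β), (1 - α) * (1 - β) / (1 + (α - 1) * β);
         α * β / (1 + (α - 1) * β), (1 - β) / (1 + (α - 1) * β)] := by
  rw [inv_one_sub_antidiag, smul_mul, mul_fin_two, smul_of]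
  ext i j
  fin_cases i <;> fin_cases j <;> simp <;> ring

theorem inv_one_sub_chain_mulVec {𝕜 : Type*} [Field 𝕜] (α β tb tc : 𝕜) :
    (1 - !![0, 1 - α; β, 0])⁻¹ *ᵥ ![tb, tc] =
      ![(tb + (1 - α) * tc) / (1 + (α - 1) * β), (β * tb + tc) / (1 + (α - 1) * β)] := by
  rw [inv_one_sub_antidiag, smul_mulVec, mulVec_cons]
  ext i
  fin_cases i <;> simp <;> ring

theorem two_reduction_routes_agree_general
    (α β tb tc : ℝ)
    (K12 K21 K22 K21' : Matrix (Fin 2) (Fin 2) ℝ) (tR tE tE' : Fin 2 → ℝ)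
    (hK21 : K21 = !![α, 0; 0, 1 - β])
    (hK22 : K22 = !![0, 1 - α; β, 0])
    (hK21' : K21' = !![α / (1 + (α - 1) * β), (1 - α) * (1 - β) / (1 + (α - 1) * β);
                       α * β / (1 + (α - 1) * β), (1 - β) / (1 + (α - 1) * β)])
    (htE : tE = ![tb, tc])
    (htE' : tE' = ![(tb + (1 - α) * tc) / (1 + (α - 1) * β),
                    (β * tb + tc) / (1 + (α - 1) * β)]) :
    K12 * (1 - K22)⁻¹ * K21 = K12 * K21' ∧
    tR + Matrix.mulVec (K12 * (1 - K22)⁻¹) tE = tR + Matrix.mulVec K12 tE' := by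
  subst hK21 hK22 hK21' htE htE'
  rw [Matrix.mul_assoc, inv_one_sub_chain_mul_exit, ← mulVec_mulVec, inv_one_sub_chain_mulVec]
  exact ⟨rfl, rfl⟩

/-- For the one-dimensional four-state network `a–b–c–d`, directly eliminating the states
`b, c` (route 1) and first making `b, c` mutually invisible with the adjusted transition
probabilities and residence times of the paper's Appendix B and then eliminating them
(route 2) yield identical reduced transition probabilities between `a` and `d` and
identical reduced residence times. -/
theorem two_reduction_routes_agree
    (α β γ η ta tb tc td : ℝ)
    (hα0 : 0 ≤ α) (hα1 : α ≤ 1) (hβ0 : 0 ≤ β) (hβ1 : β ≤ 1)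
    (hγ0 : 0 ≤ γ) (hγ1 : γ ≤ 1) (hη0 : 0 ≤ η) (hη1 : η ≤ 1)
    (hab : (1 - α) * β < 1)
    (K12 K21 K22 K21' : Matrix (Fin 2) (Fin 2) ℝ) (tR tE tE' : Fin 2 → ℝ)
    (hK12 : K12 = !![1 - γ, 0; 0, η])
    (hK21 : K21 = !![α, 0; 0, 1 - β])
    (hK22 : K22 = !![0, 1 - α; β, 0])
    (hK21' : K21' = !![α / (1 + (α - 1) * β), (1 - α) * (1 - β) / (1 + (α - 1) * β);
                       α * β / (1 + (α - 1) * β), (1 - β) / (1 + (α - 1) * β)])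
    (htR : tR = ![ta, td]) (htE : tE = ![tb, tc])
    (htE' : tE' = ![(tb + (1 - α) * tc) / (1 + (α - 1) * β),
                    (β * tb + tc) / (1 + (α - 1) * β)]) :
    K12 * (1 - K22)⁻¹ * K21 = K12 * K21' ∧
    tR + Matrix.mulVec (K12 * (1 - K22)⁻¹) tE = tR + Matrix.mulVec K12 tE' :=
  two_reduction_routes_agree_general α β tb tc K12 K21 K22 K21' tR tE tE' hK21 hK22 hK21' htE htE'
end
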